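/- arXiv:1311.4429 — 4 statements merged into one kernel-verified Lean document; each statement's English description precedes it below -/
import Mathlib

section
/- Let Z be a real normed space and x, y ∈ Z. If x and y are orthogonal, i.e. ‖x + y‖ = ‖x − y‖ = ‖x‖ + ‖y‖, then for every t ∈ [0,1] we have ‖t•x + (1−t)•y‖ = t‖x‖ + (1−t)‖y‖. -/
/-! If `‖x + y‖ = ‖x‖ + ‖y‖`, the norm is additive on the whole cone spanned by `x` and `y`:
for `0 ≤ b ≤ a`, write `a • (x + y) = (a • x + b • y) + (a - b) • y`; the triangle inequality then
bounds `‖a • x + b • y‖` from below by `a * ‖x‖ + b * ‖y‖`, and it bounds it from above anyway. -/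

section NormAddEq

variable {E : Type*} [NormedAddCommGroup E] [NormedSpace ℝ E] {x y : E}

lemma norm_smul_add_smul_of_norm_add_eq_of_le (h : ‖x + y‖ = ‖x‖ + ‖y‖) {a b : ℝ}
    (hb : 0 ≤ b) (hba : b ≤ a) : ‖a • x + b • y‖ = a * ‖x‖ + b * ‖y‖ := by
  have ha : 0 ≤ a := hb.trans hba
  have hab : 0 ≤ a - b := sub_nonneg.2 hba
  refine le_antisymm ?_ ?_
  · calc ‖a • x + b • y‖ ≤ ‖a • x‖ + ‖b • y‖ := norm_add_le _ _
      _ = a * ‖x‖ + b * ‖y‖ := by rw [norm_smul_of_nonneg ha, norm_smul_of_nonneg hb]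
  · have hlower : a * (‖x‖ + ‖y‖) ≤ ‖a • x + b • y‖ + (a - b) * ‖y‖ :=
      calc a * (‖x‖ + ‖y‖) = ‖a • (x + y)‖ := by rw [norm_smul_of_nonneg ha, h]
        _ = ‖(a • x + b • y) + (a - b) • y‖ := by congr 1; module
        _ ≤ ‖a • x + b • y‖ + ‖(a - b) • y‖ := norm_add_le _ _
        _ = ‖a • x + b • y‖ + (a - b) * ‖y‖ := by rw [norm_smul_of_nonneg hab]
    linarith

lemma norm_smul_add_smul_of_norm_add_eq (h : ‖x + y‖ = ‖x‖ + ‖y‖) {a b : ℝ}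
    (ha : 0 ≤ a) (hb : 0 ≤ b) : ‖a • x + b • y‖ = a * ‖x‖ + b * ‖y‖ := by
  rcases le_total b a with hba | hab
  · exact norm_smul_add_smul_of_norm_add_eq_of_le h hb hba
  · have h' : ‖y + x‖ = ‖y‖ + ‖x‖ := by rw [add_comm, h, add_comm]
    rw [add_comm, norm_smul_add_smul_of_norm_add_eq_of_le h' ha hab, add_comm]

end NormAddEq

theorem stmt_0_general {Z : Type*} [NormedAddCommGroup Z] [NormedSpace ℝ Z]
    (x y : Z) (h1 : ‖x + y‖ = ‖x‖ + ‖y‖)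
    (t : ℝ) (ht0 : 0 ≤ t) (ht1 : t ≤ 1) :
    ‖t • x + (1 - t) • y‖ = t * ‖x‖ + (1 - t) * ‖y‖ :=
  norm_smul_add_smul_of_norm_add_eq h1 ht0 (sub_nonneg.2 ht1)

theorem stmt_0 {Z : Type*} [NormedAddCommGroup Z] [NormedSpace ℝ Z]
    (x y : Z) (h1 : ‖x + y‖ = ‖x‖ + ‖y‖) (h2 : ‖x - y‖ = ‖x‖ + ‖y‖)
    (t : ℝ) (ht0 : 0 ≤ t) (ht1 : t ≤ 1) :
    ‖t • x + (1 - t) • y‖ = t * ‖x‖ + (1 - t) * ‖y‖ :=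
  stmt_0_general x y h1 t ht0 ht1
end

section
/- Let Z be a real normed space, e ∈ Z* with ‖e‖ ≤ 1, F_e = {x : ‖x‖ ≤ 1, e(x) = 1} and F_{−e} = {x : ‖x‖ ≤ 1, e(x) = −1}. Let v ∈ Z* with ‖v‖ ≤ 1 and F_v = {x : ‖x‖ ≤ 1, v(x) = 1}, and assume F_v is nonempty and every element of the closed unit ball lies in the convex hull of F_e ∪ F_{−e}. Then F_v ∩ F_e ≠ ∅ or F_{−v} ∩ F_e ≠ ∅ (where F_{−v} = {x : ‖x‖ ≤ 1, v(x) = −1}). -/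
/-!
If neither `F_v ∩ F_e` nor `F_{-v} ∩ F_e` meets, then `v < 1` on `F_e` (points of `F_v`
are excluded) and on `F_{-e}` (a point `y` there with `v y = 1` gives `-y ∈ F_{-v} ∩ F_e`).
The open half-space `{v < 1}` is convex, so it contains the convex hull of `F_e ∪ F_{-e}`,
hence the whole unit ball, contradicting `F_v ≠ ∅`.
-/

section

variable {Z : Type*} [NormedAddCommGroup Z] [NormedSpace ℝ Z]

lemma ContinuousLinearMap.apply_le_one_of_norm_le_one {v : Z →L[ℝ] ℝ} (hv : ‖v‖ ≤ 1) {x : Z}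
    (hx : ‖x‖ ≤ 1) : v x ≤ 1 :=
  (le_abs_self _).trans <| by simpa using v.le_of_opNorm_le_of_le hv hx

lemma faces_union_subset_apply_lt_one {e v : Z →L[ℝ] ℝ} (hv : ‖v‖ ≤ 1)
    (hpos : ¬({x : Z | ‖x‖ ≤ 1 ∧ v x = 1} ∩ {x : Z | ‖x‖ ≤ 1 ∧ e x = 1}).Nonempty)
    (hneg : ¬({x : Z | ‖x‖ ≤ 1 ∧ v x = -1} ∩ {x : Z | ‖x‖ ≤ 1 ∧ e x = 1}).Nonempty) :
    {x : Z | ‖x‖ ≤ 1 ∧ e x = 1} ∪ {x : Z | ‖x‖ ≤ 1 ∧ e x = -1} ⊆ {y | v y < 1} := by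
  rintro y (⟨hy, hey⟩ | ⟨hy, hey⟩) <;>
    refine (v.apply_le_one_of_norm_le_one hv hy).lt_of_ne fun hvy => ?_
  · exact hpos ⟨y, ⟨hy, hvy⟩, hy, hey⟩
  · exact hneg ⟨-y, ⟨by simpa using hy, by simp [hvy]⟩, by simpa using hy, by simp [hey]⟩

end

theorem stmt_8_general {Z : Type*} [NormedAddCommGroup Z] [NormedSpace ℝ Z]
    (e v : Z →L[ℝ] ℝ) (hv : ‖v‖ ≤ 1)
    (hVnonempty : {x : Z | ‖x‖ ≤ 1 ∧ v x = 1}.Nonempty)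
    (hball : ∀ x : Z, ‖x‖ ≤ 1 →
      x ∈ convexHull ℝ ({x : Z | ‖x‖ ≤ 1 ∧ e x = 1} ∪ {x : Z | ‖x‖ ≤ 1 ∧ e x = -1})) :
    ({x : Z | ‖x‖ ≤ 1 ∧ v x = 1} ∩ {x : Z | ‖x‖ ≤ 1 ∧ e x = 1}).Nonempty ∨
    ({x : Z | ‖x‖ ≤ 1 ∧ v x = -1} ∩ {x : Z | ‖x‖ ≤ 1 ∧ e x = 1}).Nonempty := by
  by_contra! ⟨hpos, hneg⟩
  obtain ⟨x₀, hx₀, hvx₀⟩ := hVnonempty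
  have hlt : v x₀ < 1 :=
    convexHull_min (faces_union_subset_apply_lt_one hv (by simp [hpos]) (by simp [hneg]))
      (convex_halfSpace_lt v.toLinearMap.isLinear 1) (hball x₀ hx₀)
  exact hlt.ne hvx₀

theorem stmt_8 {Z : Type*} [NormedAddCommGroup Z] [NormedSpace ℝ Z]
    (e v : Z →L[ℝ] ℝ) (he : ‖e‖ ≤ 1) (hv : ‖v‖ ≤ 1)
    (hVnonempty : {x : Z | ‖x‖ ≤ 1 ∧ v x = 1}.Nonempty)
    (hball : ∀ x : Z, ‖x‖ ≤ 1 →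
      x ∈ convexHull ℝ ({x : Z | ‖x‖ ≤ 1 ∧ e x = 1} ∪ {x : Z | ‖x‖ ≤ 1 ∧ e x = -1})) :
    ({x : Z | ‖x‖ ≤ 1 ∧ v x = 1} ∩ {x : Z | ‖x‖ ≤ 1 ∧ e x = 1}).Nonempty ∨
    ({x : Z | ‖x‖ ≤ 1 ∧ v x = -1} ∩ {x : Z | ‖x‖ ≤ 1 ∧ e x = 1}).Nonempty :=
  stmt_8_general e v hv hVnonempty hball
end

section
/- Let f, g ∈ L¹(μ) be real-valued integrable functions. If ‖f + g‖₁ = ‖f − g‖₁ = ‖f‖₁ + ‖g‖₁, then f·g = 0 almost everywhere. -/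
/-! Since `|f + g| ≤ |f| + |g|` pointwise, equality of the integrals forces equality a.e., and
likewise for `f - g`. At a point where `|a + b| = |a - b| = |a| + |b|`, the numbers `a` and `b` have
both the same and opposite signs, so one of them vanishes. -/

open MeasureTheory

theorem mul_eq_zero_of_abs_add_eq_of_abs_sub_eq {R : Type*} [CommRing R] [LinearOrder R]
    [IsStrictOrderedRing R] {a b : R} (hadd : |a + b| = |a| + |b|)
    (hsub : |a - b| = |a| + |b|) : a * b = 0 := by
  have hsame := (abs_add_eq_add_abs_iff a b).mp hadd
  have hopp := (abs_add_eq_add_abs_iff a (-b)).mp (by rwa [abs_neg, ← sub_eq_add_neg])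
  rcases hsame with ⟨ha, hb⟩ | ⟨ha, hb⟩ <;> rcases hopp with ⟨ha', hb'⟩ | ⟨ha', hb'⟩ <;> nlinarith

theorem ae_abs_add_eq_of_integral_abs_add_eq {α : Type*} [MeasurableSpace α] {μ : Measure α}
    {f g : α → ℝ} (hf : Integrable f μ) (hg : Integrable g μ)
    (h : ∫ x, |f x + g x| ∂μ = ∫ x, |f x| ∂μ + ∫ x, |g x| ∂μ) :
    ∀ᵐ x ∂μ, |f x + g x| = |f x| + |g x| := by
  rw [← integral_add hf.abs hg.abs] at h
  exact (integral_eq_iff_of_ae_le (hf.add hg).abs (hf.abs.add hg.abs)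
    (.of_forall fun x => abs_add_le (f x) (g x))).mp h

theorem stmt_11 {Ω : Type*} [MeasurableSpace Ω] (μ : Measure Ω)
    (f g : Ω → ℝ) (hf : Integrable f μ) (hg : Integrable g μ)
    (hadd : ∫ ω, |f ω + g ω| ∂μ = ∫ ω, |f ω| ∂μ + ∫ ω, |g ω| ∂μ)
    (hsub : ∫ ω, |f ω - g ω| ∂μ = ∫ ω, |f ω| ∂μ + ∫ ω, |g ω| ∂μ) :
    f * g =ᵐ[μ] 0 := by
  have hsub' : ∫ ω, |f ω + (-g) ω| ∂μ = ∫ ω, |f ω| ∂μ + ∫ ω, |(-g) ω| ∂μ := by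
    simpa only [Pi.neg_apply, ← sub_eq_add_neg, abs_neg] using hsub
  filter_upwards [ae_abs_add_eq_of_integral_abs_add_eq hf hg hadd,
    ae_abs_add_eq_of_integral_abs_add_eq hf hg.neg hsub'] with ω hω hω'
  rw [Pi.neg_apply, abs_neg, ← sub_eq_add_neg] at hω'
  exact mul_eq_zero_of_abs_add_eq_of_abs_sub_eq hω hω'
end

section
/- In ℝⁿ equipped with the ℓ¹ norm, let e = (ε₁, …, εₙ) with each εᵢ ∈ {−1, 1}, regarded as a linear functional via e(x) = Σ εᵢ xᵢ. Then the closed unit ball of (ℝⁿ, ‖·‖₁) equals the convex hull of F_e ∪ F_{−e}, where F_e = {x : ‖x‖₁ = 1, e(x) = 1} and F_{−e} = {x : ‖x‖₁ = 1, e(x) = −1} (for n ≥ 1). -/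
/-!
Every signed basis vector `±δᵢ` lies on the unit sphere and pairs with `e` to `±eᵢ = ±1`, so it
belongs to `F_e ∪ F_{-e}`. A point `x` of the ℓ¹ unit sphere is the convex combination
`∑ |xᵢ| • (±δᵢ)` of such vectors, and the unit ball is the convex hull of the unit sphere.
-/

open Metric

theorem PiLp.sphere_subset_convexHull_single {ι : Type*} [Fintype ι] [DecidableEq ι] :
    sphere (0 : PiLp 1 (fun _ : ι => ℝ)) 1 ⊆
      convexHull ℝ {y | ∃ i, ∃ s : ℝ, |s| = 1 ∧ y = PiLp.single 1 i s} := by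
  intro x hx
  rw [mem_sphere_zero_iff_norm, PiLp.norm_eq_of_L1] at hx
  set σ : ι → ℝ := fun i => if 0 ≤ x i then 1 else -1
  have hσ : ∀ i, |σ i| = 1 := fun i => by simp only [σ]; split_ifs <;> simp
  have hx_eq : x = ∑ i, |x i| • PiLp.single 1 i (σ i) := by
    ext j
    simp only [σ, WithLp.ofLp_sum, WithLp.ofLp_smul, Finset.sum_apply, Pi.smul_apply,
      PiLp.ofLp_single, Pi.single_apply, smul_eq_mul, mul_ite, mul_zero, Finset.sum_ite_eq,
      Finset.mem_univ, if_true]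
    split_ifs with h
    · rw [abs_of_nonneg h, mul_one]
    · rw [abs_of_neg (not_le.mp h)]; ring
  rw [hx_eq]
  exact (convex_convexHull ℝ _).sum_mem (fun i _ => abs_nonneg _) (by simpa using hx)
    fun i _ => subset_convexHull ℝ _ ⟨i, σ i, hσ i, rfl⟩

theorem PiLp.single_mem_faces_of_abs_eq_one {ι : Type*} [Fintype ι] [DecidableEq ι] {e : ι → ℝ}
    (he : ∀ i, e i = -1 ∨ e i = 1) {i : ι} {s : ℝ} (hs : |s| = 1) :
    PiLp.single 1 i s ∈
      {x : PiLp 1 (fun _ : ι => ℝ) | ‖x‖ = 1 ∧ ∑ i, e i * x i = 1} ∪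
        {x : PiLp 1 (fun _ : ι => ℝ) | ‖x‖ = 1 ∧ ∑ i, e i * x i = -1} := by
  have hpair : ∑ j, e j * (PiLp.single 1 i s : PiLp 1 (fun _ : ι => ℝ)) j = e i * s := by
    simp [PiLp.single_apply]
  have hprod : |e i * s| = 1 := by
    rcases he i with h | h <;> simp [h, hs]
  rw [Set.mem_union, Set.mem_ofPred_eq, Set.mem_ofPred_eq, PiLp.norm_single, Real.norm_eq_abs,
    hpair, hs]
  simpa using abs_eq zero_le_one |>.mp hprod

theorem stmt_14 (n : ℕ) (hn : 1 ≤ n) (e : Fin n → ℝ)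
    (he : ∀ i, e i = -1 ∨ e i = 1) :
    {x : PiLp 1 (fun _ : Fin n => ℝ) | ‖x‖ ≤ 1} =
      convexHull ℝ
        ({x : PiLp 1 (fun _ : Fin n => ℝ) | ‖x‖ = 1 ∧ ∑ i, e i * x i = 1} ∪
         {x : PiLp 1 (fun _ : Fin n => ℝ) | ‖x‖ = 1 ∧ ∑ i, e i * x i = -1}) := by
  have : Nonempty (Fin n) := ⟨⟨0, hn⟩⟩
  have hball : {x : PiLp 1 (fun _ : Fin n => ℝ) | ‖x‖ ≤ 1} = closedBall 0 1 := by
    ext; simp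
  rw [hball]
  refine subset_antisymm ?_ (convexHull_min ?_ (convex_closedBall 0 1))
  · rw [← convexHull_sphere_eq_closedBall 0 zero_le_one]
    refine convexHull_min (PiLp.sphere_subset_convexHull_single.trans (convexHull_mono ?_))
      (convex_convexHull ℝ _)
    rintro _ ⟨i, s, hs, rfl⟩
    exact PiLp.single_mem_faces_of_abs_eq_one he hs
  · rintro x (⟨hx, -⟩ | ⟨hx, -⟩) <;> simp [hx]
end
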